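/- Let Z be a Banach space with a monotone Schauder basis (e_m), and for each m let X_m be the linear span of e₁, …, e_m. Then n(Z) ≥ limsup_{m→∞} n(X_m). -/

import Mathlib

open scoped ENNReal

noncomputable def vrad {X : Type*} [NormedAddCommGroup X] [NormedSpace ℝ X] (T : X →L[ℝ] X) : ℝ :=
  sSup {r : ℝ | ∃ x : X, ∃ f : X →L[ℝ] ℝ, ‖x‖ = 1 ∧ ‖f‖ = 1 ∧ f x = 1 ∧ r = |f (T x)|}

noncomputable def nindex (X : Type*) [NormedAddCommGroup X] [NormedSpace ℝ X] : ℝ :=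
  sInf {r : ℝ | ∃ T : X →L[ℝ] X, ‖T‖ = 1 ∧ r = vrad T}

/-! Fix `T` on `Z` with `‖T‖ = 1` and compress it to `X_m` as `P_m T|_{X_m}`. A norm-one functional
on `X_m` extends to `Z` through `P_m`, so the compression has numerical radius at most `v(T)`;
and since `P_m → id` strongly with `‖P_m‖ = 1`, its norm tends to `1`. As `n(X) ‖S‖ ≤ v(S)` for
every operator `S`, this gives `n(X_m) ≤ d · v(T)` eventually, for every `d > 1`. -/

open Filter Topology

section NumericalRange

variable {X : Type*} [NormedAddCommGroup X] [NormedSpace ℝ X]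

lemma abs_apply_le_norm_of_norm_eq_one (T : X →L[ℝ] X) {x : X} {f : X →L[ℝ] ℝ}
    (hx : ‖x‖ = 1) (hf : ‖f‖ = 1) : |f (T x)| ≤ ‖T‖ :=
  calc |f (T x)| = ‖f (T x)‖ := (Real.norm_eq_abs _).symm
    _ ≤ ‖f‖ * (‖T‖ * ‖x‖) := f.le_of_opNorm_le_of_le le_rfl (T.le_opNorm x)
    _ = ‖T‖ := by rw [hx, hf, one_mul, mul_one]

lemma abs_apply_le_vrad (T : X →L[ℝ] X) {x : X} {f : X →L[ℝ] ℝ}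
    (hx : ‖x‖ = 1) (hf : ‖f‖ = 1) (hfx : f x = 1) : |f (T x)| ≤ vrad T :=
  le_csSup ⟨‖T‖, by rintro _ ⟨y, g, hy, hg, -, rfl⟩; exact abs_apply_le_norm_of_norm_eq_one T hy hg⟩
    ⟨x, f, hx, hf, hfx, rfl⟩

lemma vrad_nonneg (T : X →L[ℝ] X) : 0 ≤ vrad T :=
  Real.sSup_nonneg (by rintro _ ⟨x, f, -, -, -, rfl⟩; positivity)

lemma vrad_smul (c : ℝ) (T : X →L[ℝ] X) : vrad (c • T) = |c| * vrad T := by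
  rw [vrad, vrad, ← smul_eq_mul, ← Real.sSup_smul_of_nonneg (abs_nonneg c)]
  congr 1
  ext r
  simp only [Set.mem_smul_set, Set.mem_ofPred_eq, smul_apply, map_smul,
    smul_eq_mul, abs_mul]
  constructor
  · rintro ⟨x, f, hx, hf, hfx, rfl⟩
    exact ⟨_, ⟨x, f, hx, hf, hfx, rfl⟩, rfl⟩
  · rintro ⟨_, ⟨x, f, hx, hf, hfx, rfl⟩, rfl⟩
    exact ⟨x, f, hx, hf, hfx, rfl⟩

lemma nindex_nonneg : 0 ≤ nindex X :=
  Real.sInf_nonneg (by rintro _ ⟨T, -, rfl⟩; exact vrad_nonneg T)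

lemma nindex_mul_norm_le_vrad (S : X →L[ℝ] X) : nindex X * ‖S‖ ≤ vrad S := by
  rcases eq_or_ne S 0 with rfl | hS
  · simpa using vrad_nonneg (0 : X →L[ℝ] X)
  have hpos : 0 < ‖S‖ := norm_pos_iff.2 hS
  have hnormalized : ‖‖S‖⁻¹ • S‖ = 1 := by
    rw [norm_smul, norm_inv, norm_norm, inv_mul_cancel₀ hpos.ne']
  have h : nindex X ≤ vrad (‖S‖⁻¹ • S) :=
    csInf_le ⟨0, by rintro _ ⟨T, -, rfl⟩; exact vrad_nonneg T⟩ ⟨_, hnormalized, rfl⟩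
  rwa [vrad_smul, abs_inv, abs_norm, le_inv_mul_iff₀ hpos, mul_comm] at h

end NumericalRange

section Compression

variable {Z : Type*} [NormedAddCommGroup Z] [NormedSpace ℝ Z]

lemma vrad_compression_le (K : Submodule ℝ Z) (P : Z →L[ℝ] Z) (hPK : ∀ z, P z ∈ K)
    (hP : ‖P‖ ≤ 1) (hPfix : ∀ x ∈ K, P x = x) (T : Z →L[ℝ] Z) :
    vrad (P.codRestrict K hPK ∘L T ∘L K.subtypeL) ≤ vrad T := by
  refine Real.sSup_le ?_ (vrad_nonneg T)
  rintro _ ⟨x, f, hx, hf, hfx, rfl⟩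
  set g := f ∘L P.codRestrict K hPK
  have hgx : g x = 1 := by
    rw [← hfx]
    exact congrArg f (Subtype.ext (hPfix x x.2))
  have hg : ‖g‖ = 1 := by
    refine le_antisymm (ContinuousLinearMap.opNorm_le_bound _ zero_le_one fun z => ?_) ?_
    · calc ‖g z‖ ≤ ‖f‖ * ‖P z‖ := f.le_opNorm _
        _ ≤ 1 * (1 * ‖z‖) := by rw [hf]; gcongr; exact P.le_of_opNorm_le hP z
        _ = 1 * ‖z‖ := by rw [one_mul]
    · simpa [hgx] using g.unit_le_opNorm x hx.le
  exact abs_apply_le_vrad T hx hg hgx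

lemma tendsto_apply_comp_apply {ι : Type*} {l : Filter ι} {P : ι → Z →L[ℝ] Z} {C : ℝ}
    (hP : ∀ i, ‖P i‖ ≤ C) (hlim : ∀ z, Tendsto (fun i => P i z) l (𝓝 z))
    (T : Z →L[ℝ] Z) (x : Z) : Tendsto (fun i => P i (T (P i x))) l (𝓝 (T x)) := by
  have hsmall : Tendsto (fun i => P i (T (P i x - x))) l (𝓝 0) := by
    refine squeeze_zero_norm (fun i => (P i).le_of_opNorm_le_of_le (hP i) (T.le_opNorm _)) ?_
    simpa using ((tendsto_iff_norm_sub_tendsto_zero.1 (hlim x)).const_mul ‖T‖).const_mul C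
  simpa using (hlim (T x)).add hsmall

lemma eventually_lt_norm_compression {K : ℕ → Submodule ℝ Z} {P : ℕ → Z →L[ℝ] Z}
    (hPK : ∀ m z, P m z ∈ K m) (hP : ∀ m, ‖P m‖ ≤ 1)
    (hlim : ∀ z, Tendsto (fun m => P m z) atTop (𝓝 z)) (T : Z →L[ℝ] Z) {r : ℝ} (hr : r < ‖T‖) :
    ∀ᶠ m in atTop, r < ‖(P m).codRestrict (K m) (hPK m) ∘L T ∘L (K m).subtypeL‖ := by
  obtain ⟨x, hx, hrx⟩ := T.exists_lt_apply_of_lt_opNorm hr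
  have hnear := (tendsto_apply_comp_apply hP hlim T x).norm.eventually (lt_mem_nhds hrx)
  filter_upwards [hnear] with m hm
  set Q := (P m).codRestrict (K m) (hPK m)
  have hQx : ‖Q x‖ ≤ 1 := ((P m).le_of_opNorm_le (hP m) x).trans (by rw [one_mul]; exact hx.le)
  exact hm.trans_le ((Q ∘L T ∘L (K m).subtypeL).unit_le_opNorm (Q x) hQx)

end Compression

theorem limsup_nindex_span_le_of_monotone_basis_general {Z : Type*} [NormedAddCommGroup Z]
    [NormedSpace ℝ Z]
    (e : ℕ → Z) (P : ℕ → Z →L[ℝ] Z)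
    (hnorm : ∀ m, ‖P m‖ = 1)
    (hrange : ∀ m, Set.range (P m) = (Submodule.span ℝ (e '' {k | k ≤ m}) : Set Z))
    (hfix : ∀ m, ∀ k ≤ m, P m (e k) = e k)
    (htendsto : ∀ z : Z, Filter.Tendsto (fun m => P m z) Filter.atTop (nhds z)) :
    Filter.limsup (fun m => nindex ↥(Submodule.span ℝ (e '' {k | k ≤ m}))) Filter.atTop ≤
      nindex Z := by
  set K : ℕ → Submodule ℝ Z := fun m => Submodule.span ℝ (e '' {k | k ≤ m})
  have hPK : ∀ m z, P m z ∈ K m := fun m z => (hrange m).subset ⟨z, rfl⟩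
  have hPfix : ∀ m, ∀ x ∈ K m, P m x = x := fun m =>
    LinearMap.eqOn_span (f := (P m : Z →ₗ[ℝ] Z)) (g := LinearMap.id)
      (by rintro _ ⟨k, hk, rfl⟩; exact hfix m k hk)
  refine le_csInf ⟨_, P 0, hnorm 0, rfl⟩ ?_
  rintro _ ⟨T, hT, rfl⟩
  refine (le_iff_forall_one_lt_le_mul₀ (vrad_nonneg T)).2 fun d hd =>
    limsup_le_of_le (isCoboundedUnder_le_of_le atTop fun m => nindex_nonneg) ?_
  filter_upwards [eventually_lt_norm_compression hPK (fun m => (hnorm m).le) htendsto T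
    (hT ▸ inv_lt_one_of_one_lt₀ hd)] with m hm
  have h : nindex (K m) * d⁻¹ ≤ vrad T :=
    calc nindex (K m) * d⁻¹
        ≤ nindex (K m) * ‖(P m).codRestrict (K m) (hPK m) ∘L T ∘L (K m).subtypeL‖ :=
          mul_le_mul_of_nonneg_left hm.le nindex_nonneg
      _ ≤ vrad ((P m).codRestrict (K m) (hPK m) ∘L T ∘L (K m).subtypeL) :=
          nindex_mul_norm_le_vrad _
      _ ≤ vrad T := vrad_compression_le (K m) (P m) (hPK m) (hnorm m).le (hPfix m) T
  rwa [← div_eq_mul_inv, div_le_iff₀ (by positivity)] at h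

/-- If `Z` has a monotone Schauder basis `(e_m)` (with canonical norm-one
projections `P m` onto the span of `e_0, …, e_m`), then `n(Z) ≥ limsup_m n(X_m)` where `X_m`
is the span of the first basis vectors. -/
theorem limsup_nindex_span_le_of_monotone_basis {Z : Type*} [NormedAddCommGroup Z]
    [NormedSpace ℝ Z] [CompleteSpace Z]
    (e : ℕ → Z) (P : ℕ → Z →L[ℝ] Z)
    (hnorm : ∀ m, ‖P m‖ = 1)
    (hrange : ∀ m, Set.range (P m) = (Submodule.span ℝ (e '' {k | k ≤ m}) : Set Z))
    (hfix : ∀ m, ∀ k ≤ m, P m (e k) = e k)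
    (hzero : ∀ m k, m < k → P m (e k) = 0)
    (htendsto : ∀ z : Z, Filter.Tendsto (fun m => P m z) Filter.atTop (nhds z)) :
    Filter.limsup (fun m => nindex ↥(Submodule.span ℝ (e '' {k | k ≤ m}))) Filter.atTop ≤
      nindex Z :=
  limsup_nindex_span_le_of_monotone_basis_general e P hnorm hrange hfix htendsto
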